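/- If a monomial x_{i_1} ∧ ⋯ ∧ x_{i_n} (with i_1 < ⋯ < i_n) is an element of the NBC basis of the Orlik–Solomon algebra of an ordered hyperplane arrangement, then the flag F = (H_{i_n} ⊇ H_{i_{n−1}} ∩ H_{i_n} ⊇ ⋯ ⊇ H_{i_1} ∩ ⋯ ∩ H_{i_n}) is descendent, and conversely each descendent flag F gives an NBC monomial x_{j_{F,1}} ∧ ⋯ ∧ x_{j_{F,n}}; this correspondence is a bijection between NBC monomials of degree n and descendent flags of length n. -/

import Mathlib

/-!
An NBC monomial `i` gives the flag of tail intersections `S_k = H_{i_k} ∩ ⋯ ∩ H_{i_n}`; the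
independence of the forms makes `dim S_k = k`, and the NBC condition says exactly that
`j_{F,k} = i_k`, so the flag is descendent and `i` is recovered from it.

Conversely, for a descendent flag put `i_k = j_{F,k}`. Then `H_{i_k} ⊇ S_k` but `H_{i_k}` contains
no later `S_m`, so vectors `v_k ∈ S_{k+1} \ H_{i_k}` pair triangularly with the forms `α_{i_k}`,
which are therefore independent. The tail intersection then has the dimension of `S_k` and
contains it, hence equals it.
-/

noncomputable section

/-- The flat of a central arrangement (modelling an arrangement in `ℂP^n` by kernels of
linear forms on `ℂ^{n+1}`) determined by a set of hyperplane indices. -/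
def arrFlat (n l : ℕ) (α : Fin l → ((Fin (n + 1) → ℂ) →ₗ[ℂ] ℂ)) (S : Finset (Fin l)) :
    Submodule ℂ (Fin (n + 1) → ℂ) :=
  ⨅ i ∈ S, LinearMap.ker (α i)

/-- The minimal index (as a natural number) of a hyperplane of the arrangement containing
the subspace `P` (junk value if there is none). -/
def minIdx (n l : ℕ) (α : Fin l → ((Fin (n + 1) → ℂ) →ₗ[ℂ] ℂ))
    (P : Submodule ℂ (Fin (n + 1) → ℂ)) : ℕ :=
  sInf {j : ℕ | ∃ hj : j < l, P ≤ LinearMap.ker (α ⟨j, hj⟩)}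

/-- `i_1 < ⋯ < i_n`, the forms are linearly independent, and each `H_{i_k}` is the
minimal-index hyperplane containing `H_{i_k} ∩ ⋯ ∩ H_{i_n}`: an NBC monomial. -/
def IsNBC (n l : ℕ) (α : Fin l → ((Fin (n + 1) → ℂ) →ₗ[ℂ] ℂ)) (i : Fin n → Fin l) : Prop :=
  StrictMono i ∧ LinearIndependent ℂ (fun k => α (i k)) ∧
    ∀ k : Fin n,
      minIdx n l α (⨅ m ∈ Finset.univ.filter (fun m : Fin n => k ≤ m),
        LinearMap.ker (α (i m))) = (i k : ℕ)

/-- A (complete, length `n`) flag of flats of the arrangement: an increasing chain of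
flats `S_1 ⊆ ⋯ ⊆ S_n` with `S_k` of linear dimension `k` (projective dimension `k-1`). -/
def IsFlag (n l : ℕ) (α : Fin l → ((Fin (n + 1) → ℂ) →ₗ[ℂ] ℂ))
    (S : Fin n → Submodule ℂ (Fin (n + 1) → ℂ)) : Prop :=
  Monotone S ∧ (∀ k, ∃ T : Finset (Fin l), S k = arrFlat n l α T) ∧
    ∀ k : Fin n, Module.finrank ℂ (S k) = (k : ℕ) + 1

/-- A flag is descendent if the minimal indices `j_{F,k}` are strictly increasing. -/
def IsDescendent (n l : ℕ) (α : Fin l → ((Fin (n + 1) → ℂ) →ₗ[ℂ] ℂ))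
    (S : Fin n → Submodule ℂ (Fin (n + 1) → ℂ)) : Prop :=
  StrictMono fun k => minIdx n l α (S k)

open Module LinearMap Submodule

section LinearAlgebra

variable {K V : Type*} [Field K] [AddCommGroup V] [Module K V]

theorem finrank_biInf_ker_add_card [FiniteDimensional K V] {ι : Type*} {f : ι → V →ₗ[K] K}
    (hf : LinearIndependent K f) (s : Finset ι) :
    finrank K ↥(⨅ m ∈ s, ker (f m)) + s.card = finrank K V := by
  have hs : ⨅ m ∈ s, ker (f m) = (span K (Set.range fun m : s => f m)).dualCoannihilator := by
    apply SetLike.coe_injective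
    ext x
    simp
  rw [hs, ← Fintype.card_coe s, ← finrank_span_eq_card (hf.comp _ Subtype.val_injective),
    add_comm]
  exact Subspace.finrank_add_finrank_dualCoannihilator_eq _

theorem linearIndependent_of_triangular {ι : Type*} [LinearOrder ι] [Fintype ι]
    {f : ι → V →ₗ[K] K} (v : ι → V) (hdiag : ∀ k, f k (v k) ≠ 0)
    (htri : ∀ k m, k < m → f m (v k) = 0) : LinearIndependent K f := by
  rw [Fintype.linearIndependent_iff]
  intro g hg k
  induction k using WellFoundedLT.induction with
  | ind k ih =>
    have hk : ∑ m, g m * f m (v k) = 0 := by simpa using congr($hg (v k))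
    rw [Finset.sum_eq_single k] at hk
    · exact (mul_eq_zero.mp hk).resolve_right (hdiag k)
    · intro m _ hmk
      rcases hmk.lt_or_gt with hlt | hgt
      · rw [ih m hlt, zero_mul]
      · rw [htri k m hgt, mul_zero]
    · simp

def tailFlat {n : ℕ} (f : Fin n → V →ₗ[K] K) (k : Fin n) : Submodule K V :=
  ⨅ m ∈ Finset.univ.filter (fun m : Fin n => k ≤ m), ker (f m)

variable {n : ℕ} {f : Fin n → V →ₗ[K] K}

theorem tailFlat_le_ker {k m : Fin n} (h : k ≤ m) : tailFlat f k ≤ ker (f m) :=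
  iInf₂_le m (by simpa using h)

theorem monotone_tailFlat : Monotone (tailFlat f) := fun _ _ hkk' =>
  le_iInf₂ fun _ hm => tailFlat_le_ker (hkk'.trans (by simpa using hm))

theorem le_tailFlat {S : Fin n → Submodule K V} (hS : Monotone S) (hker : ∀ k, S k ≤ ker (f k))
    (k : Fin n) : S k ≤ tailFlat f k :=
  le_iInf₂ fun m hm => (hS (by simpa using hm)).trans (hker m)

theorem finrank_tailFlat_add [FiniteDimensional K V] (hf : LinearIndependent K f) (k : Fin n) :
    finrank K (tailFlat f k) + (n - k) = finrank K V := by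
  have hcard : (Finset.univ.filter (fun m : Fin n => k ≤ m)).card = n - k := by
    rw [Finset.filter_le_eq_Ici, Fin.card_Ici]
  rw [← hcard]
  exact finrank_biInf_ker_add_card hf _

end LinearAlgebra

section Arrangement

variable {n l : ℕ} {α : Fin l → ((Fin (n + 1) → ℂ) →ₗ[ℂ] ℂ)}

theorem tailFlat_eq_arrFlat (i : Fin n → Fin l) (k : Fin n) :
    tailFlat (fun m => α (i m)) k =
      arrFlat n l α ((Finset.univ.filter (fun m : Fin n => k ≤ m)).image i) := by
  simp only [tailFlat, arrFlat, Finset.iInf_finset_image]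

theorem finrank_tailFlat {i : Fin n → Fin l} (hi : LinearIndependent ℂ fun m => α (i m))
    (k : Fin n) : finrank ℂ (tailFlat (fun m => α (i m)) k) = k + 1 := by
  have := finrank_tailFlat_add hi k
  rw [finrank_fin_fun] at this
  omega

theorem minIdx_le {P : Submodule ℂ (Fin (n + 1) → ℂ)} {j : Fin l} (h : P ≤ ker (α j)) :
    minIdx n l α P ≤ j :=
  Nat.sInf_le ⟨j.isLt, h⟩

theorem exists_minIdx_of_le_ker {P : Submodule ℂ (Fin (n + 1) → ℂ)} {j : Fin l}
    (h : P ≤ ker (α j)) : ∃ j : Fin l, (j : ℕ) = minIdx n l α P ∧ P ≤ ker (α j) := by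
  obtain ⟨hlt, hle⟩ :=
    Nat.sInf_mem (s := {j : ℕ | ∃ hj : j < l, P ≤ ker (α ⟨j, hj⟩)}) ⟨j, j.isLt, h⟩
  exact ⟨⟨_, hlt⟩, rfl, hle⟩

theorem IsFlag.exists_minIdx {S : Fin n → Submodule ℂ (Fin (n + 1) → ℂ)} (hS : IsFlag n l α S)
    (k : Fin n) : ∃ j : Fin l, (j : ℕ) = minIdx n l α (S k) ∧ S k ≤ ker (α j) := by
  obtain ⟨T, hT⟩ := hS.2.1 k
  obtain ⟨j, hj⟩ : T.Nonempty := by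
    rw [Finset.nonempty_iff_ne_empty]
    rintro rfl
    have htop : S k = ⊤ :=
      hT.trans (eq_top_iff.2 (le_iInf₂ fun i hi => absurd hi (Finset.notMem_empty i)))
    have hrank := hS.2.2 k
    rw [htop, finrank_top, finrank_fin_fun] at hrank
    omega
  exact exists_minIdx_of_le_ker (hT.trans_le (iInf₂_le j hj))

theorem IsNBC.isFlag_tailFlat {i : Fin n → Fin l} (hi : IsNBC n l α i) :
    IsFlag n l α (tailFlat fun m => α (i m)) :=
  ⟨monotone_tailFlat, fun k => ⟨_, tailFlat_eq_arrFlat i k⟩, finrank_tailFlat hi.2.1⟩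

theorem IsNBC.minIdx_tailFlat {i : Fin n → Fin l} (hi : IsNBC n l α i) (k : Fin n) :
    minIdx n l α (tailFlat (fun m => α (i m)) k) = i k :=
  hi.2.2 k

theorem IsNBC.isDescendent_tailFlat {i : Fin n → Fin l} (hi : IsNBC n l α i) :
    IsDescendent n l α (tailFlat fun m => α (i m)) := by
  intro a b hab
  simp only [hi.minIdx_tailFlat]
  exact hi.1 hab

theorem linearIndependent_of_isDescendent (hα : ∀ j, α j ≠ 0)
    {S : Fin n → Submodule ℂ (Fin (n + 1) → ℂ)} (hS : Monotone S) (hD : IsDescendent n l α S)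
    {i : Fin n → Fin l} (hi_eq : ∀ k, (i k : ℕ) = minIdx n l α (S k))
    (hi_le : ∀ k, S k ≤ ker (α (i k))) : LinearIndependent ℂ fun m => α (i m) := by
  -- `H_{i_k}` cannot contain a larger flat `S_m`, since then `j_{F,m} ≤ i_k = j_{F,k}`.
  have hnot : ∀ k m, k < m → ¬ S m ≤ ker (α (i k)) := fun k m hkm hle =>
    (hD hkm).not_ge ((minIdx_le hle).trans (hi_eq k).le)
  have hvec : ∀ k, ∃ v, α (i k) v ≠ 0 ∧ ∀ m, k < m → α (i m) v = 0 := by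
    intro k
    by_cases hk : (k : ℕ) + 1 < n
    · obtain ⟨v, hvS, hvk⟩ :=
        SetLike.not_le_iff_exists.mp (hnot k ⟨k + 1, hk⟩ (Nat.lt_succ_self _))
      exact ⟨v, hvk, fun m hkm => hi_le m (hS (show (⟨k + 1, hk⟩ : Fin n) ≤ m from hkm) hvS)⟩
    · obtain ⟨v, hv⟩ := DFunLike.ne_iff.mp (hα (i k))
      refine ⟨v, hv, fun m hkm => absurd hkm ?_⟩
      simp only [Fin.lt_def, not_lt]
      omega
  choose v hv_diag hv_tri using hvec
  exact linearIndependent_of_triangular v hv_diag hv_tri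

theorem exists_nbc_of_isDescendent (hα : ∀ j, α j ≠ 0)
    {S : Fin n → Submodule ℂ (Fin (n + 1) → ℂ)} (hS : IsFlag n l α S)
    (hD : IsDescendent n l α S) : ∃ i, IsNBC n l α i ∧ tailFlat (fun m => α (i m)) = S := by
  choose i hi_eq hi_le using hS.exists_minIdx
  have hi_mono : StrictMono i := fun a b hab => by
    rw [← Fin.val_fin_lt, hi_eq, hi_eq]
    exact hD hab
  have hind := linearIndependent_of_isDescendent hα hS.1 hD hi_eq hi_le
  have hflag : tailFlat (fun m => α (i m)) = S := funext fun k =>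
    (eq_of_le_of_finrank_le (le_tailFlat hS.1 hi_le k)
      (by rw [finrank_tailFlat hind, hS.2.2 k])).symm
  refine ⟨i, ⟨hi_mono, hind, fun k => ?_⟩, hflag⟩
  show minIdx n l α (tailFlat _ k) = i k
  rw [hflag, hi_eq]

end Arrangement

/-- The correspondence sending an NBC monomial `x_{i_1} ∧ ⋯ ∧ x_{i_n}` to the flag
`(H_{i_n} ⊇ H_{i_{n-1}} ∩ H_{i_n} ⊇ ⋯ ⊇ H_{i_1} ∩ ⋯ ∩ H_{i_n})` is a bijection between
NBC monomials of degree `n` and descendent flags of length `n`. -/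
theorem stmt_11 (n l : ℕ) (α : Fin l → ((Fin (n + 1) → ℂ) →ₗ[ℂ] ℂ)) (hα : ∀ i, α i ≠ 0) :
    Set.BijOn
      (fun (i : Fin n → Fin l) (k : Fin n) =>
        ⨅ m ∈ Finset.univ.filter (fun m : Fin n => k ≤ m), LinearMap.ker (α (i m)))
      {i | IsNBC n l α i}
      {S | IsFlag n l α S ∧ IsDescendent n l α S} := by
  refine ⟨fun i hi => ⟨hi.isFlag_tailFlat, hi.isDescendent_tailFlat⟩, ?_, ?_⟩
  · intro i hi i' hi' heq
    funext k
    apply Fin.ext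
    rw [← hi.minIdx_tailFlat k, ← hi'.minIdx_tailFlat k]
    exact congrArg (minIdx n l α) (congrFun heq k)
  · rintro S ⟨hS, hD⟩
    exact exists_nbc_of_isDescendent hα hS hD

end
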